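/- arXiv:1710.02934 — 2 statements merged into one kernel-verified Lean document; each statement's English description precedes it below -/
import Mathlib

section
/- (Balancing equilibrium existence, symmetric matrix version) Let n ≥ 3 and suppose all countries are pairwise adversaries. There exists a nonnegative symmetric matrix U with zero diagonal such that for every i, Σ_{j≠i} U_{ij} = p_i, if and only if for every i, p_i ≤ Σ_{j≠i} p_j. -/
/-!
Lay the `p i` end to end as consecutive arcs of a circle of circumference `S = ∑ p i`; the
condition says that no arc is longer than half the circle. Let `U i j` be the length of the part
of arc `i` whose antipode lies in arc `j`. The antipodal map is a measure-preserving involution,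
so `U` is symmetric and its rows sum to the arc lengths, and `U i i = 0` because an arc of length
at most `S / 2` contains no two antipodal points.
Conversely `p i = ∑_{j ≠ i} U j i ≤ ∑_{j ≠ i} p j`.
-/

open Finset

section Overlap

variable {a b c d e t : ℝ}

/-- The length of `[a, b) ∩ [c, d)`. -/
def intervalOverlap (a b c d : ℝ) : ℝ := max 0 (min b d - max a c)

lemma intervalOverlap_nonneg : 0 ≤ intervalOverlap a b c d := le_max_left _ _

lemma intervalOverlap_comm (a b c d : ℝ) : intervalOverlap a b c d = intervalOverlap c d a b := by
  rw [intervalOverlap, intervalOverlap, min_comm, max_comm a]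

lemma intervalOverlap_add_add (a b c d t : ℝ) :
    intervalOverlap a b (c + t) (d + t) = intervalOverlap c d (a - t) (b - t) := by
  simp only [intervalOverlap, min_def, max_def]
  split_ifs <;> linarith

lemma intervalOverlap_sub_sub (a b c d t : ℝ) :
    intervalOverlap a b (c - t) (d - t) = intervalOverlap c d (a + t) (b + t) := by
  simp only [intervalOverlap, min_def, max_def]
  split_ifs <;> linarith

lemma intervalOverlap_add_intervalOverlap (hcd : c ≤ d) (hde : d ≤ e) :
    intervalOverlap a b c d + intervalOverlap a b d e = intervalOverlap a b c e := by
  simp only [intervalOverlap, min_def, max_def]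
  split_ifs <;> linarith

lemma intervalOverlap_eq_sub_of_le (hca : c ≤ a) (hab : a ≤ b) (hbd : b ≤ d) :
    intervalOverlap a b c d = b - a := by
  rw [intervalOverlap, min_eq_left hbd, max_eq_left hca, max_eq_right (sub_nonneg.2 hab)]

lemma intervalOverlap_add_add_eq_zero (h : b - a ≤ t) :
    intervalOverlap a b (a + t) (b + t) = 0 := by
  simp only [intervalOverlap, min_def, max_def]
  split_ifs <;> linarith

lemma sum_intervalOverlap_of_monotone {n : ℕ} (a b : ℝ) {c : Fin (n + 1) → ℝ}
    (hc : Monotone c) :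
    ∑ i : Fin n, intervalOverlap a b (c i.castSucc) (c i.succ) =
      intervalOverlap a b (c 0) (c (Fin.last n)) := by
  induction n with
  | zero => simp [intervalOverlap]
  | succ n ih =>
    simp only [Fin.sum_univ_castSucc, Fin.succ_castSucc]
    rw [ih (c := fun i => c i.castSucc) (hc.comp Fin.strictMono_castSucc.monotone),
      Fin.castSucc_zero, ← Fin.succ_last]
    exact intervalOverlap_add_intervalOverlap (hc (Fin.zero_le _)) (hc (Fin.castSucc_le_succ _))

end Overlap

lemma Fin.partialSum_last {M : Type*} [AddCommMonoid M] {n : ℕ} (f : Fin n → M) :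
    Fin.partialSum f (Fin.last n) = ∑ i, f i := by
  simp [Fin.partialSum, List.take_of_length_le, Fin.sum_ofFn]

lemma Fin.monotone_partialSum {M : Type*} [AddMonoid M] [Preorder M] [AddLeftMono M] {n : ℕ}
    {f : Fin n → M} (hf : 0 ≤ f) : Monotone (Fin.partialSum f) :=
  Fin.monotone_iff_le_succ.2 fun i => by
    rw [Fin.partialSum_succ]; exact le_add_of_nonneg_right (hf i)

section Antipodal

variable {n : ℕ} (c : Fin (n + 1) → ℝ) (r : ℝ)

/-- `c` cuts the circle `[0, 2 * r)` into the arcs `[c i, c (i + 1))`; unrolled onto the line, the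
antipodal image of arc `j` is the pair of its translates by `± r`. -/
def antipodalOverlap (i j : Fin n) : ℝ :=
  intervalOverlap (c i.castSucc) (c i.succ) (c j.castSucc + r) (c j.succ + r) +
    intervalOverlap (c i.castSucc) (c i.succ) (c j.castSucc - r) (c j.succ - r)

lemma antipodalOverlap_nonneg (i j : Fin n) : 0 ≤ antipodalOverlap c r i j :=
  add_nonneg intervalOverlap_nonneg intervalOverlap_nonneg

lemma antipodalOverlap_comm (i j : Fin n) :
    antipodalOverlap c r i j = antipodalOverlap c r j i := by
  rw [antipodalOverlap, antipodalOverlap, intervalOverlap_add_add (c i.castSucc),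
    intervalOverlap_sub_sub (c i.castSucc), add_comm]

lemma antipodalOverlap_self {i : Fin n} (hi : c i.succ - c i.castSucc ≤ r) :
    antipodalOverlap c r i i = 0 := by
  rw [antipodalOverlap, intervalOverlap_sub_sub, intervalOverlap_add_add_eq_zero hi, add_zero]

lemma sum_antipodalOverlap (hc : Monotone c) (hc0 : c 0 = 0) (hlast : c (Fin.last n) = 2 * r)
    (i : Fin n) : ∑ j, antipodalOverlap c r i j = c i.succ - c i.castSucc := by
  have hr : 0 ≤ r := by linarith [hc (Fin.zero_le (Fin.last n))]
  simp only [antipodalOverlap]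
  rw [sum_add_distrib,
    sum_intervalOverlap_of_monotone _ _ (c := fun j => c j + r) (hc.add_const r),
    sum_intervalOverlap_of_monotone _ _ (c := fun j => c j - r) (hc.add_const (-r)), add_comm]
  simp only [hc0, hlast, show 2 * r - r = 0 + r by ring]
  rw [intervalOverlap_add_intervalOverlap (by linarith) (by linarith)]
  have hlo : 0 ≤ c i.castSucc := hc0 ▸ hc (Fin.zero_le _)
  have hhi : c i.succ ≤ 2 * r := hlast ▸ hc (Fin.le_last _)
  exact intervalOverlap_eq_sub_of_le (by linarith) (hc (Fin.castSucc_le_succ i)) (by linarith)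

end Antipodal

open scoped NNReal

lemma le_sum_erase_of_symm {ι R : Type*} [Fintype ι] [DecidableEq ι] [AddCommMonoid R]
    [PartialOrder R] [CanonicallyOrderedAdd R] [IsOrderedAddMonoid R]
    {U : ι → ι → R} {p : ι → R}
    (hdiag : ∀ i, U i i = 0) (hsymm : ∀ i j, U i j = U j i) (hrow : ∀ i, ∑ j, U i j = p i)
    (i : ι) : p i ≤ ∑ j ∈ univ.erase i, p j := by
  rw [← hrow i, ← add_sum_erase _ _ (mem_univ i), hdiag, zero_add]
  refine sum_le_sum fun j _ => ?_
  calc U i j = U j i := hsymm i j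
    _ ≤ ∑ k, U j k := single_le_sum (fun k _ => zero_le) (mem_univ i)
    _ = p j := hrow j

lemma exists_symm_of_two_mul_le_sum {n : ℕ} (p : Fin n → ℝ≥0)
    (hp : ∀ i, 2 * p i ≤ ∑ j, p j) :
    ∃ U : Fin n → Fin n → ℝ≥0,
      (∀ i, U i i = 0) ∧ (∀ i j, U i j = U j i) ∧ (∀ i, ∑ j, U i j = p i) := by
  set c := Fin.partialSum fun i => (p i : ℝ)
  set r := (∑ i, (p i : ℝ)) / 2 with r_def
  have hc : Monotone c := Fin.monotone_partialSum fun i => (p i).coe_nonneg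
  have hstep (i : Fin n) : c i.succ - c i.castSucc = p i := by
    simp only [c, Fin.partialSum_succ, add_sub_cancel_left]
  have hlast : c (Fin.last n) = 2 * r := by
    simp only [c, r_def, Fin.partialSum_last]; ring
  refine ⟨fun i j => (antipodalOverlap c r i j).toNNReal, fun i => ?_,
    fun i j => congrArg Real.toNNReal (antipodalOverlap_comm c r i j), fun i => ?_⟩
  · have hpi : (2 * p i : ℝ) ≤ ∑ j, (p j : ℝ) := by exact_mod_cast hp i
    simp only [antipodalOverlap_self c r (by linarith [hstep i]), Real.toNNReal_zero]
  · apply NNReal.coe_injective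
    simp only [NNReal.coe_sum, Real.coe_toNNReal _ (antipodalOverlap_nonneg c r i _)]
    rw [sum_antipodalOverlap c r hc (by simp [c]) hlast, hstep]

theorem balancing_equilibrium_iff_general {n : ℕ} (p : Fin n → NNReal) :
    (∃ U : Fin n → Fin n → NNReal,
      (∀ i, U i i = 0) ∧ (∀ i j, U i j = U j i) ∧ (∀ i, ∑ j, U i j = p i)) ↔
    (∀ i, p i ≤ ∑ j ∈ Finset.univ.erase i, p j) := by
  refine ⟨fun ⟨U, hdiag, hsymm, hrow⟩ => le_sum_erase_of_symm hdiag hsymm hrow, fun h => ?_⟩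
  refine exists_symm_of_two_mul_le_sum p fun i => ?_
  rw [← add_sum_erase _ _ (mem_univ i), two_mul]
  gcongr
  exact h i

theorem balancing_equilibrium_iff {n : ℕ} (hn : 3 ≤ n) (p : Fin n → NNReal) :
    (∃ U : Fin n → Fin n → NNReal,
      (∀ i, U i i = 0) ∧ (∀ i j, U i j = U j i) ∧ (∀ i, ∑ j, U i j = p i)) ↔
    (∀ i, p i ≤ ∑ j ∈ Finset.univ.erase i, p j) :=
  balancing_equilibrium_iff_general p
end

section
/- Let n ≥ 2 and suppose all countries are pairwise adversaries and for every i, p_i < Σ_{j≠i} p_j. Fix a country i₀. Then there exists a nonnegative matrix U with row sums p_i, zero diagonal, such that σ_{i₀}(U) > τ_{i₀}(U) and σ_j(U) < τ_j(U) for every j ≠ i₀, where σ_i(U) = U_{ii} + Σ_{j≠i} U_{ij} and τ_i(U) = Σ_{j≠i} U_{ji}. -/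
/-!
Such a `U` is a nonnegative zero-diagonal matrix with row sums `p` and column sums `c`, where `c`
arises from `p` by moving a little mass from `i₀` to everybody else: `σ_j = p j` and `τ_j = c j`.
Since `2 p_i < S := ∑ p` strictly, a small enough move keeps `p_i + c_i ≤ S` for all `i`, and
this condition suffices for margins `r, c ≥ 0` of common total `S`: put mass
`δ = min (r i, c j)` on an entry `(i, j)`, `i ≠ j`, which zeroes a margin entry so that we may
recurse, unless some other `k` would have slack `S - r k - c k` below `δ`; then put the least
such slack instead, which makes `k` tight (`r k + c k = S`), and a tight `k` is served by row
`k` and column `k` alone.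
-/

open Finset Filter Topology

variable {ι : Type*} [Fintype ι] [DecidableEq ι]

structure IsOffDiagonalPlan (U : Matrix ι ι ℝ) (r c : ι → ℝ) : Prop where
  nonneg : ∀ i j, 0 ≤ U i j
  diag_eq_zero : ∀ i, U i i = 0
  sum_row : ∀ i, ∑ j, U i j = r i
  sum_col : ∀ j, ∑ i, U i j = c j

structure IsFeasibleMargins (r c : ι → ℝ) : Prop where
  row_nonneg : ∀ i, 0 ≤ r i
  col_nonneg : ∀ i, 0 ≤ c i
  sum_row_eq_sum_col : ∑ i, r i = ∑ i, c i
  row_add_col_le : ∀ i, r i + c i ≤ ∑ j, r j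

namespace IsOffDiagonalPlan

variable {U : Matrix ι ι ℝ} {r c : ι → ℝ}

omit [DecidableEq ι] in
lemma zero : IsOffDiagonalPlan (0 : Matrix ι ι ℝ) 0 0 :=
  ⟨fun _ _ => le_rfl, fun _ => rfl, fun _ => sum_const_zero, fun _ => sum_const_zero⟩

lemma add_single {i j : ι} (hij : i ≠ j) {δ : ℝ} (hδ : 0 ≤ δ)
    (hU : IsOffDiagonalPlan U (r - Pi.single i δ) (c - Pi.single j δ)) :
    IsOffDiagonalPlan (U + Matrix.single i j δ) r c where
  nonneg k l := add_nonneg (hU.nonneg k l) (by rw [Matrix.single_apply]; split_ifs <;> simp [hδ])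
  diag_eq_zero k := by
    simp only [Matrix.add_apply, hU.diag_eq_zero, Matrix.single_apply, zero_add]
    exact if_neg fun h => hij (h.1.trans h.2.symm)
  sum_row k := by
    simp [Matrix.single_apply, sum_add_distrib, hU.sum_row, ite_and, Pi.single_apply, eq_comm]
  sum_col l := by
    simp [Matrix.single_apply, sum_add_distrib, hU.sum_col, ite_and, Pi.single_apply, eq_comm]

lemma sum_erase_col (hU : IsOffDiagonalPlan U r c) (j : ι) : ∑ i ∈ univ.erase j, U i j = c j := by
  rw [← hU.sum_col j, ← add_sum_erase _ _ (mem_univ j), hU.diag_eq_zero, zero_add]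

end IsOffDiagonalPlan

lemma filter_pos_sub_single_subset (f : ι → ℝ) (i : ι) {δ : ℝ} (hδ : 0 ≤ δ) :
    ({k | 0 < (f - Pi.single i δ : ι → ℝ) k} : Finset ι) ⊆ ({k | 0 < f k} : Finset ι) :=
  monotone_filter_right _ fun k _ hk =>
    hk.trans_le (sub_le_self _ ((Pi.single_nonneg.2 hδ : (0 : ι → ℝ) ≤ _) k))

lemma card_pos_sub_single_self_lt {f : ι → ℝ} {i : ι} (hi : 0 < f i) :
    #{k | 0 < (f - Pi.single i (f i) : ι → ℝ) k} < #{k | 0 < f k} :=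
  card_lt_card <| (ssubset_iff_of_subset (filter_pos_sub_single_subset f i hi.le)).2
    ⟨i, by simp [hi], by simp⟩

namespace IsFeasibleMargins

variable {r c : ι → ℝ}

lemma exists_plan_of_tight (h : IsFeasibleMargins r c) {a : ι} (ha : r a + c a = ∑ i, r i) :
    ∃ U : Matrix ι ι ℝ, IsOffDiagonalPlan U r c := by
  refine ⟨fun i j => if i = a then (if j = a then 0 else c j) else if j = a then r i else 0,
    fun i j => ?_, fun i => ?_, fun i => ?_, fun j => ?_⟩
  · split_ifs <;> simp [h.row_nonneg, h.col_nonneg]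
  · split_ifs <;> rfl
  · by_cases hi : i = a
    · subst hi
      simp only [if_true, sum_ite, sum_const_zero, filter_ne', sum_erase_eq_sub (mem_univ i),
        zero_add, ← h.sum_row_eq_sum_col]
      linarith
    · simp [hi]
  · by_cases hj : j = a
    · subst hj
      simp only [if_true, sum_ite, sum_const_zero, filter_ne', sum_erase_eq_sub (mem_univ j),
        zero_add]
      linarith
    · simp [hj]

lemma sub_single (h : IsFeasibleMargins r c) {i j : ι} (hij : i ≠ j) {δ : ℝ}
    (hri : δ ≤ r i) (hcj : δ ≤ c j)
    (hslack : ∀ k, k ≠ i → k ≠ j → δ ≤ ∑ l, r l - r k - c k) :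
    IsFeasibleMargins (r - Pi.single i δ) (c - Pi.single j δ) := by
  have hr : ∑ k, (r - Pi.single i δ : ι → ℝ) k = ∑ k, r k - δ := by simp [sum_sub_distrib]
  have hc : ∑ k, (c - Pi.single j δ : ι → ℝ) k = ∑ k, c k - δ := by simp [sum_sub_distrib]
  refine ⟨fun k => ?_, fun k => ?_, by rw [hr, hc, h.sum_row_eq_sum_col], fun k => ?_⟩
  · simp only [Pi.sub_apply, Pi.single_apply]
    split_ifs with hk
    · subst hk; linarith
    · linarith [h.row_nonneg k]
  · simp only [Pi.sub_apply, Pi.single_apply]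
    split_ifs with hk
    · subst hk; linarith
    · linarith [h.col_nonneg k]
  · rw [hr]
    simp only [Pi.sub_apply, Pi.single_apply]
    have := h.row_add_col_le k
    split_ifs with hki hkj hkj
    · exact absurd (hki.symm.trans hkj) hij
    · linarith
    · linarith
    · linarith [hslack k hki hkj]

lemma exists_plan_of_slack_lt (h : IsFeasibleMargins r c) {i j : ι} (hij : i ≠ j)
    (hslack : ∃ k ∈ (univ.erase i).erase j, ∑ l, r l - r k - c k < min (r i) (c j)) :
    ∃ U : Matrix ι ι ℝ, IsOffDiagonalPlan U r c := by
  obtain ⟨k₀, hk₀, hk₀lt⟩ := hslack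
  obtain ⟨k, hk, hkmin⟩ := ((univ.erase i).erase j).exists_min_image
    (fun k => ∑ l, r l - r k - c k) ⟨k₀, hk₀⟩
  obtain ⟨hkj, hki⟩ : k ≠ j ∧ k ≠ i := by simpa using hk
  set δ := ∑ l, r l - r k - c k
  have hδ : δ ≤ min (r i) (c j) := (hkmin k₀ hk₀).trans hk₀lt.le
  have h' := h.sub_single hij (hδ.trans (min_le_left _ _)) (hδ.trans (min_le_right _ _))
    fun l hli hlj => hkmin l (by simp [hli, hlj])
  have hk_tight : (r - Pi.single i δ : ι → ℝ) k + (c - Pi.single j δ : ι → ℝ) k =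
      ∑ l, (r - Pi.single i δ : ι → ℝ) l := by
    simp [hki, hkj, sum_sub_distrib, δ]
    ring
  obtain ⟨U, hU⟩ := h'.exists_plan_of_tight hk_tight
  exact ⟨_, hU.add_single hij (by linarith [h.row_add_col_le k])⟩

end IsFeasibleMargins

theorem IsFeasibleMargins.exists_plan {r c : ι → ℝ} (h : IsFeasibleMargins r c) :
    ∃ U : Matrix ι ι ℝ, IsOffDiagonalPlan U r c := by
  by_cases hr : ∀ i, r i = 0
  · have hc : ∀ i, c i = 0 := by
      have hsum : ∑ i, c i = 0 := by simp [← h.sum_row_eq_sum_col, hr]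
      simpa using (sum_eq_zero_iff_of_nonneg fun i _ => h.col_nonneg i).1 hsum
    obtain rfl : r = 0 := funext hr
    obtain rfl : c = 0 := funext hc
    exact ⟨0, .zero⟩
  push Not at hr
  obtain ⟨i, hi⟩ : ∃ i, 0 < r i := hr.imp fun i h' => (h.row_nonneg i).lt_of_ne' h'
  have hc : 0 < ∑ k ∈ univ.erase i, c k := by
    rw [sum_erase_eq_sub (mem_univ i), ← h.sum_row_eq_sum_col]
    linarith [h.row_add_col_le i]
  obtain ⟨j, hj, hcj⟩ : ∃ j ∈ univ.erase i, 0 < c j :=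
    exists_lt_of_sum_lt (f := 0) (g := c) (by simpa using hc)
  have hij : i ≠ j := (ne_of_mem_erase hj).symm
  by_cases hslack : ∃ k ∈ (univ.erase i).erase j, ∑ l, r l - r k - c k < min (r i) (c j)
  · exact h.exists_plan_of_slack_lt hij hslack
  push Not at hslack
  have h' := h.sub_single hij (min_le_left _ _) (min_le_right _ _)
    fun l hli hlj => hslack l (by simp [hli, hlj])
  obtain ⟨U, hU⟩ := h'.exists_plan
  exact ⟨_, hU.add_single hij (le_min hi.le hcj.le)⟩
termination_by #{k | 0 < r k} + #{k | 0 < c k}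
decreasing_by
  rcases min_choice (r i) (c j) with hmin | hmin <;> rw [hmin]
  · exact add_lt_add_of_lt_of_le (card_pos_sub_single_self_lt hi)
      (card_le_card (filter_pos_sub_single_subset c j hi.le))
  · exact add_lt_add_of_le_of_lt (card_le_card (filter_pos_sub_single_subset r i hcj.le))
      (card_pos_sub_single_self_lt hcj)

lemma exists_feasible_margins_of_two_mul_lt_sum {p : ι → ℝ} (hp : ∀ i, 0 < p i)
    (hlt : ∀ i, 2 * p i < ∑ j, p j) (i₀ : ι) :
    ∃ c, IsFeasibleMargins p c ∧ c i₀ < p i₀ ∧ ∀ j ≠ i₀, p j < c j := by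
  obtain ⟨t, ht, hti₀, htj⟩ :
      ∃ t > 0, t * (∑ j, p j - p i₀) < p i₀ ∧ ∀ j, (2 + t) * p j < ∑ j, p j := by
    have h₁ : ∀ᶠ t in 𝓝 (0 : ℝ), t * (∑ j, p j - p i₀) < p i₀ :=
      ContinuousAt.eventually_lt (by fun_prop) continuousAt_const (by simpa using hp i₀)
    have h₂ : ∀ᶠ t in 𝓝 (0 : ℝ), ∀ j, (2 + t) * p j < ∑ j, p j := eventually_all.2 fun j =>
      ContinuousAt.eventually_lt (by fun_prop) continuousAt_const (by simpa using hlt j)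
    exact (eventually_mem_nhdsWithin.and (nhdsWithin_le_nhds (h₁.and h₂))).exists (f := 𝓝[>] 0)
  have hpS : 0 < t * (∑ j, p j - p i₀) := mul_pos ht (by linarith [hlt i₀, hp i₀])
  let c : ι → ℝ := fun j => (1 + t) * p j - if j = i₀ then t * ∑ k, p k else 0
  refine ⟨c, ⟨fun i => (hp i).le, fun j => ?_, ?_, fun j => ?_⟩, ?_, fun j hj => ?_⟩
  · dsimp only [c]
    split_ifs with hj
    · subst hj; linarith
    · nlinarith [hp j]
  · simp only [c, sum_sub_distrib, ← mul_sum, sum_ite_eq', mem_univ, if_true]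
    ring
  · dsimp only [c]
    split_ifs with hj
    · subst hj; linarith [hlt j]
    · linarith [htj j]
  · simp only [c, if_true]
    linarith
  · simp only [c, if_neg hj]
    nlinarith [hp j]

theorem sole_survivor_exists_general {n : ℕ} (p : Fin n → ℝ)
    (hp : ∀ i, 0 < p i)
    (hlt : ∀ i, p i < ∑ j ∈ Finset.univ.erase i, p j)
    (i₀ : Fin n) :
    ∃ U : Fin n → Fin n → ℝ,
      (∀ i j, 0 ≤ U i j) ∧
      (∀ i, U i i = 0) ∧
      (∀ i, ∑ j, U i j = p i) ∧
      (U i₀ i₀ + ∑ j ∈ Finset.univ.erase i₀, U i₀ j >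
        ∑ j ∈ Finset.univ.erase i₀, U j i₀) ∧
      (∀ j, j ≠ i₀ →
        U j j + ∑ k ∈ Finset.univ.erase j, U j k <
          ∑ k ∈ Finset.univ.erase j, U k j) := by
  have h2p : ∀ i, 2 * p i < ∑ j, p j := fun i => by
    linarith [sum_erase_eq_sub (f := p) (mem_univ i), hlt i]
  obtain ⟨c, hc, hci₀, hcj⟩ := exists_feasible_margins_of_two_mul_lt_sum hp h2p i₀
  obtain ⟨U, hU⟩ := hc.exists_plan
  have hrow (i : Fin n) : U i i + ∑ j ∈ univ.erase i, U i j = p i := by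
    rw [add_sum_erase _ _ (mem_univ i), hU.sum_row]
  refine ⟨U, hU.nonneg, hU.diag_eq_zero, hU.sum_row, ?_, fun j hj => ?_⟩
  · rw [hrow, hU.sum_erase_col]
    exact hci₀
  · rw [hrow, hU.sum_erase_col]
    exact hcj j hj

theorem sole_survivor_exists {n : ℕ} (hn : 2 ≤ n) (p : Fin n → ℝ)
    (hp : ∀ i, 0 < p i)
    (hlt : ∀ i, p i < ∑ j ∈ Finset.univ.erase i, p j)
    (i₀ : Fin n) :
    ∃ U : Fin n → Fin n → ℝ,
      (∀ i j, 0 ≤ U i j) ∧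
      (∀ i, U i i = 0) ∧
      (∀ i, ∑ j, U i j = p i) ∧
      (U i₀ i₀ + ∑ j ∈ Finset.univ.erase i₀, U i₀ j >
        ∑ j ∈ Finset.univ.erase i₀, U j i₀) ∧
      (∀ j, j ≠ i₀ →
        U j j + ∑ k ∈ Finset.univ.erase j, U j k <
          ∑ k ∈ Finset.univ.erase j, U k j) :=
  sole_survivor_exists_general p hp hlt i₀
end
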